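/- arXiv:1107.5855 — 3 statements merged into one kernel-verified Lean document; each statement's English description precedes it below -/
import Mathlib

section
/- Let V be a free ℤ-module of rank n with a fixed basis e₁,…,eₙ, and let q₀ be the Euclidean quadratic form making this basis orthonormal. For any rank-k submodule W of V, if w ∈ Λᵏ V is a primitive element representing W (i.e. generating the rank-1 saturation of Λᵏ W in Λᵏ V), then Δ(W, q₀) = ‖w‖², where ‖·‖ is the norm on Λᵏ V induced by declaring the wedge products of basis vectors orthonormal (Cauchy–Binet). -/
/-!
The rows `v₁, …, v_k` of `M` span `W ⊗ ℝ`, and `w = v₁ ∧ ⋯ ∧ v_k` in `⋀ᵏ ℝⁿ`. The inner product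
on `⋀ᵏ ℝⁿ` satisfies `⟪v₁ ∧ ⋯ ∧ v_k, v₁ ∧ ⋯ ∧ v_k⟫ = det (⟪vᵢ, vⱼ⟫)`, which is the discriminant
of `q₀` on `W`. Expanding `‖w‖²` in the orthonormal basis `e_{i₁} ∧ ⋯ ∧ e_{i_k}` gives the sum of
the squares of the coordinates of `w`, and these coordinates are the `k × k` minors of `M`.
-/

/-- The discriminant (Gram determinant) of a quadratic form `q` with respect to
a family of vectors `b`. -/
noncomputable def gramDet {ι V : Type*} [Fintype ι] [DecidableEq ι] [AddCommGroup V]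
    [Module ℝ V] (q : QuadraticForm ℝ V) (b : ι → V) : ℝ :=
  (Matrix.of fun i j => QuadraticMap.polar (⇑q) (b i) (b j) / 2).det

open Matrix

theorem QuadraticMap.polar_eq_two_mul_dotProduct {J : Type*} [Fintype J]
    (q : QuadraticForm ℝ (J → ℝ)) (hq : ∀ x, q x = ∑ j, x j ^ 2) (x y : J → ℝ) :
    polar q x y = 2 * (x ⬝ᵥ y) := by
  simp only [polar, hq, Pi.add_apply, dotProduct, Finset.mul_sum, ← Finset.sum_sub_distrib]
  exact Finset.sum_congr rfl fun j _ => by ring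

theorem gramDet_eq_det_gram {ι J : Type*} [Fintype ι] [DecidableEq ι] [Fintype J]
    (q : QuadraticForm ℝ (J → ℝ)) (hq : ∀ x, q x = ∑ j, x j ^ 2) (v : ι → J → ℝ) :
    gramDet q v = (gram ℝ fun i => WithLp.toLp 2 (v i)).det := by
  unfold gramDet
  congr with i j
  rw [QuadraticMap.polar_eq_two_mul_dotProduct q hq, EuclideanSpace.inner_eq_star_dotProduct]
  simp [dotProduct_comm]

theorem exteriorPower.basis_repr_ιMulti {R M I : Type*} [CommRing R] [AddCommGroup M]
    [Module R M] [LinearOrder I] {k : ℕ} (b : Module.Basis I R M) (v : Fin k → M)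
    (s : Set.powersetCard I k) :
    (b.exteriorPower k).repr (ιMulti R k v) s =
      (of fun i j => b.repr (v i) (Set.powersetCard.ofFinEmbEquiv.symm s j)).det := by
  rw [basis_repr_apply, ιMultiDual_apply_ιMulti]
  rfl

open exteriorPower in
theorem Matrix.det_gram_eq_sum_det_sq {I : Type*} [Fintype I] [LinearOrder I] {k : ℕ}
    (v : Fin k → EuclideanSpace ℝ I) :
    (gram ℝ v).det = ∑ s : Set.powersetCard I k,
      (of fun i j => v i (Set.powersetCard.ofFinEmbEquiv.symm s j)).det ^ 2 := by
  let e := EuclideanSpace.basisFun I ℝ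
  rw [← inner_ιMulti_self, real_inner_self_eq_norm_sq, ← (e.exteriorPower k).sum_sq_inner_right]
  refine Fintype.sum_congr _ _ fun s => ?_
  rw [← OrthonormalBasis.repr_apply_apply, ← OrthonormalBasis.coe_toBasis_repr_apply,
    OrthonormalBasis.toBasis_exteriorPower, basis_repr_ιMulti]
  rfl

open Set.powersetCard in
theorem Set.powersetCard.sum_comp_ofFinEmbEquiv_symm {I β : Type*} [Fintype I] [LinearOrder I]
    [AddCommMonoid β] {k : ℕ} [DecidablePred fun f : Fin k → I => StrictMono f]
    (g : (Fin k → I) → β) :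
    ∑ s : powersetCard I k, g (ofFinEmbEquiv.symm s) =
      ∑ f ∈ Finset.univ.filter (fun f : Fin k → I => StrictMono f), g f :=
  Finset.sum_bij' (fun s _ => ofFinEmbEquiv.symm s)
    (fun f hf => ofFinEmbEquiv (OrderEmbedding.ofStrictMono f (Finset.mem_filter.1 hf).2))
    (fun s _ => by simpa using (ofFinEmbEquiv.symm s).strictMono) (by simp)
    (fun s _ => ofFinEmbEquiv.apply_symm_apply s)
    (fun f _ => by rw [Equiv.symm_apply_apply]; rfl) (fun _ _ => rfl)

/-- Cauchy–Binet: for a rank-`k` submodule `W` of `ℤⁿ` with basis given by the rows of `M`,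
represented by a primitive element `w` of `Λᵏ ℤⁿ` (whose coordinates in the standard basis of
`Λᵏ ℤⁿ`, indexed by strictly monotone maps `Fin k → Fin n`, are the `k × k` minors of `M`),
the discriminant of the standard Euclidean form `q₀` on `W` equals `‖w‖²`, the sum of the
squares of these coordinates. -/
theorem discriminant_eq_norm_sq_of_primitive_wedge
    (n k : ℕ) (hk : k ≤ n)
    [DecidablePred fun f : Fin k → Fin n => StrictMono f]
    (q₀ : QuadraticForm ℝ (Fin n → ℝ)) (hq₀ : ∀ x, q₀ x = ∑ i, x i ^ 2)
    (W : Submodule ℤ (Fin n → ℤ)) (b : Module.Basis (Fin k) ℤ W)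
    (M : Matrix (Fin k) (Fin n) ℤ) (hM : ∀ i j, M i j = (b i : Fin n → ℤ) j)
    (hprim : (Finset.univ.filter fun f : Fin k → Fin n => StrictMono f).gcd
        (fun f => (M.submatrix id f).det) = 1) :
    gramDet q₀ (fun i => fun j => ((b i : Fin n → ℤ) j : ℝ)) =
      ∑ f ∈ Finset.univ.filter (fun f : Fin k → Fin n => StrictMono f),
        ((M.submatrix id f).det : ℝ) ^ 2 := by
  simp only [← hM]
  rw [gramDet_eq_det_gram q₀ hq₀, det_gram_eq_sum_det_sq,
    ← Set.powersetCard.sum_comp_ofFinEmbEquiv_symm fun f => ((M.submatrix id f).det : ℝ) ^ 2]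
  simp only [Int.cast_det]
  rfl
end

section
/- Let V be a Euclidean vector space of dimension n with a lattice L, and let q be a positive-definite quadratic form on V. If α₁,…,αₘ are elements of L that span V over ℝ, then there exists an index k with √(q(αₖ)) ≥ Δ(L, q)^{1/(2n)}, where Δ(L,q) is the Gram determinant of a ℤ-basis of L. -/
open Finset Module

theorem Real.prod_le_pow_card_of_sum_le {ι : Type*} (s : Finset ι) {z : ι → ℝ} {c : ℝ}
    (hz : ∀ i ∈ s, 0 ≤ z i) (hsum : ∑ i ∈ s, z i ≤ #s * c) : ∏ i ∈ s, z i ≤ c ^ #s := by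
  rcases s.eq_empty_or_nonempty with rfl | hs
  · simp
  have hcard : (0 : ℝ) < #s := by exact_mod_cast hs.card_pos
  have hmean : 0 ≤ (∑ i ∈ s, z i) / #s := div_nonneg (sum_nonneg hz) hcard.le
  have hamgm := Real.geom_mean_le_arith_mean s (fun _ => 1) z (fun _ _ => zero_le_one)
    (by simpa using hcard) hz
  simp only [Real.rpow_one, sum_const, nsmul_eq_mul, mul_one, one_mul] at hamgm
  rw [Real.rpow_inv_le_iff_of_pos (prod_nonneg hz) hmean hcard, Real.rpow_natCast] at hamgm
  exact hamgm.trans (pow_le_pow_left₀ hmean ((div_le_iff₀' hcard).mpr hsum) _)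

theorem Matrix.PosSemidef.det_le_pow_card_of_diag_le {n : Type*} [Fintype n] [DecidableEq n]
    {A : Matrix n n ℝ} (hA : A.PosSemidef) {c : ℝ} (hdiag : ∀ i, A i i ≤ c) :
    A.det ≤ c ^ Fintype.card n := by
  have htrace := hA.isHermitian.trace_eq_sum_eigenvalues
  rw [hA.isHermitian.det_eq_prod_eigenvalues]
  simp only [RCLike.ofReal_real_eq_id, id] at htrace ⊢
  refine Real.prod_le_pow_card_of_sum_le univ (fun i _ => hA.eigenvalues_nonneg i) ?_
  calc ∑ i, hA.isHermitian.eigenvalues i = ∑ i, A i i := htrace.symm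
    _ ≤ ∑ _i : n, c := sum_le_sum fun i _ => hdiag i
    _ = Fintype.card n * c := by simp

theorem Real.rpow_one_div_two_mul_le_sqrt {x y : ℝ} {n : ℕ} (hx : 0 ≤ x) (hy : 0 ≤ y)
    (hn : n ≠ 0) (h : x ≤ y ^ n) : x ^ (1 / (2 * (n : ℝ))) ≤ √y := calc
  x ^ (1 / (2 * (n : ℝ))) ≤ (y ^ n) ^ (1 / (2 * (n : ℝ))) :=
    Real.rpow_le_rpow hx h (by positivity)
  _ = √y := by
    rw [← Real.rpow_natCast, ← Real.rpow_mul hy, Real.sqrt_eq_rpow]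
    congr 1
    field_simp

theorem exists_basis_comp_of_span_eq_top {ι K V : Type*} [Field K] [AddCommGroup V] [Module K V]
    [FiniteDimensional K V] {n : ℕ} (hn : finrank K V = n) (v : ι → V)
    (hv : Submodule.span K (Set.range v) = ⊤) :
    ∃ (g : Fin n → ι) (β : Basis (Fin n) K V), ∀ i, β i = v (g i) := by
  obtain ⟨κ, a, -, hspan, hli⟩ := exists_linearIndependent' K v
  let bκ : Basis κ K V := Basis.mk hli (by rw [hspan, hv])
  have : Fintype κ := @Fintype.ofFinite κ (Module.Finite.finite_basis bκ)
  let e : κ ≃ Fin n := Fintype.equivFinOfCardEq ((finrank_eq_card_basis bκ).symm.trans hn)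
  exact ⟨a ∘ e.symm, bκ.reindex e, fun i => by simp [bκ]⟩

section Gram

variable {ι V : Type*} [Fintype ι] [DecidableEq ι] [AddCommGroup V] [Module ℝ V]

theorem Module.Basis.one_le_det_toMatrix_sq {b b' : Basis ι ℝ V}
    (h : ∀ i, b' i ∈ Submodule.span ℤ (Set.range b)) : 1 ≤ (b.toMatrix b').det ^ 2 := by
  have hint : ∀ i j, ∃ z : ℤ, (z : ℝ) = b.toMatrix b' i j := fun i j =>
    (b.mem_span_iff_repr_mem ℤ (b' j)).mp (h j) i
  choose C hC using hint
  have hdet : (b.toMatrix b').det = ((Matrix.of C).det : ℝ) := by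
    rw [Int.cast_det]
    congr 1
    ext i j
    exact (hC i j).symm
  have hne : (Matrix.of C).det ≠ 0 := by
    have := b.invertibleToMatrix b'
    have hunit := (b.toMatrix b').isUnit_det_of_invertible
    rw [hdet] at hunit
    exact_mod_cast hunit.ne_zero
  rw [hdet, one_le_sq_iff_one_le_abs]
  exact_mod_cast Int.one_le_abs hne

theorem QuadraticForm.discr_eq_det_toMatrix_sq_mul (q : QuadraticForm ℝ V) (b b' : Basis ι ℝ V) :
    q.discr b' = (b.toMatrix b').det ^ 2 * q.discr b := by
  have := QuadraticForm.discr_comp (b := b') b q LinearMap.id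
  rwa [LinearMap.toMatrix_id_eq_basis_toMatrix, ← sq] at this

theorem QuadraticForm.posDef_toMatrix {q : QuadraticForm ℝ V} (hq : q.PosDef) (b : Basis ι ℝ V) :
    (q.toMatrix b).PosDef := by
  rw [← q.toQuadraticMap_associated ℝ] at hq
  exact (LinearMap.BilinForm.posDef_toQuadraticMap_iff_matrix b _
    (LinearMap.BilinForm.isSymm_iff.mpr (QuadraticForm.associated_isSymm ℝ q))).mp hq

theorem gramDet_eq_discr (q : QuadraticForm ℝ V) (b : Basis ι ℝ V) :
    gramDet q b = q.discr b := by
  rw [gramDet, QuadraticForm.discr, QuadraticForm.toMatrix]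
  congr 1
  ext i j
  simp [LinearMap.toMatrix₂_apply, QuadraticMap.associated_apply, QuadraticMap.polar]
  ring

variable {q : QuadraticForm ℝ V}

theorem gramDet_pos (hq : q.PosDef) (b : Basis ι ℝ V) : 0 < gramDet q b := by
  rw [gramDet_eq_discr]
  exact (q.posDef_toMatrix hq b).det_pos

theorem gramDet_le_gramDet_of_mem_span_int (hq : q.PosDef) {b b' : Basis ι ℝ V}
    (h : ∀ i, b' i ∈ Submodule.span ℤ (Set.range b)) : gramDet q b ≤ gramDet q b' := by
  have hpos := gramDet_pos hq b
  rw [gramDet_eq_discr] at hpos ⊢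
  rw [gramDet_eq_discr, q.discr_eq_det_toMatrix_sq_mul b b']
  exact le_mul_of_one_le_left hpos.le (b.one_le_det_toMatrix_sq h)

theorem gramDet_le_pow_card_of_le (hq : q.PosDef) (b : Basis ι ℝ V) {c : ℝ}
    (h : ∀ i, q (b i) ≤ c) : gramDet q b ≤ c ^ Fintype.card ι := by
  rw [gramDet_eq_discr]
  refine (q.posDef_toMatrix hq b).posSemidef.det_le_pow_card_of_diag_le fun i => ?_
  rw [QuadraticForm.toMatrix, LinearMap.toMatrix₂_apply, QuadraticMap.associated_eq_self_apply]
  exact h i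

end Gram

/-- Minkowski-type estimate: if `α₁, …, αₘ` are lattice vectors (integral combinations of
the lattice basis `b`) spanning the `n`-dimensional space over `ℝ`, then for some `k`,
`√(q(αₖ)) ≥ Δ(L, q)^(1/(2n))`. -/
theorem exists_large_lattice_generator
    (n m : ℕ) (hn : 0 < n)
    (q : QuadraticForm ℝ (Fin n → ℝ)) (hq : ∀ x, x ≠ 0 → 0 < q x)
    (b : Module.Basis (Fin n) ℝ (Fin n → ℝ))
    (α : Fin m → Fin n → ℝ)
    (hmem : ∀ i, α i ∈ Submodule.span ℤ (Set.range ⇑b))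
    (hspan : Submodule.span ℝ (Set.range α) = ⊤) :
    ∃ k, Real.sqrt (q (α k)) ≥ (gramDet q ⇑b) ^ ((1 : ℝ) / (2 * (n : ℝ))) := by
  obtain ⟨g, β, hβ⟩ := exists_basis_comp_of_span_eq_top (finrank_fin_fun ℝ) α hspan
  have : Nonempty (Fin n) := ⟨⟨0, hn⟩⟩
  obtain ⟨k, -, hk⟩ := exists_max_image univ (fun i => q (β i)) univ_nonempty
  have hle : gramDet q b ≤ q (β k) ^ n := calc
    gramDet q b ≤ gramDet q β :=
      gramDet_le_gramDet_of_mem_span_int hq fun i => hβ i ▸ hmem (g i)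
    _ ≤ q (β k) ^ n := by
      simpa using gramDet_le_pow_card_of_le hq β fun i => hk i (mem_univ i)
  refine ⟨g k, ?_⟩
  rw [← hβ k]
  exact Real.rpow_one_div_two_mul_le_sqrt (gramDet_pos hq b).le (QuadraticMap.PosDef.nonneg hq _)
    hn.ne' hle
end

section
/- Let V be a free ℤ-module of rank 2 and let q, q′ be positive-semidefinite quadratic forms on V_ℝ, each with one-dimensional rational kernel (i.e. each vanishes exactly on a line spanned by a primitive lattice vector). Let Γ = SL(V), and let Γ_q, Γ_{q′} be the stabilizers of q and q′ under the right action (q·σ = q∘σ). Then for any C > 0 there are at most finitely many double cosets Γ_q σ Γ_{q′} with 0 < Δ(V, q∘σ + q′) < C. -/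
/-- The right action of `SL₂(ℤ)` on quadratic forms on `ℝ² = H₁(T;ℝ)`: `q · σ = q ∘ σ`. -/
noncomputable def actSL (q : QuadraticForm ℝ (Fin 2 → ℝ))
    (σ : Matrix.SpecialLinearGroup (Fin 2) ℤ) : QuadraticForm ℝ (Fin 2 → ℝ) :=
  q.comp (Matrix.mulVecLin ((σ : Matrix (Fin 2) (Fin 2) ℤ).map (fun z => (z : ℝ))))

section Aux

open QuadraticMap Matrix

/-- If a positive semidefinite quadratic form vanishes at `v`, then `v` is in the kernel of
its polar form. -/
lemma polar_zero_of_psd (q : QuadraticForm ℝ (Fin 2 → ℝ)) (hq : ∀ x, 0 ≤ q x)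
    (v : Fin 2 → ℝ) (hv : q v = 0) (x : Fin 2 → ℝ) : polar (⇑q) v x = 0 := by
  set P := polar (⇑q) v x with hP
  set Q := q x with hQ
  have hQ0 : 0 ≤ Q := hq x
  have key : ∀ s : ℝ, 0 ≤ s * P + s ^ 2 * Q := by
    intro s
    have h1 : q (v + s • x) = q v + q (s • x) + polar (⇑q) v (s • x) := by
      simp only [QuadraticMap.polar]; ring
    have h2 : polar (⇑q) v (s • x) = s * P := by
      rw [hP]; exact polar_smul_right q s v x
    have h3 : q (s • x) = s ^ 2 * Q := by
      rw [hQ, QuadraticMap.map_smul, smul_eq_mul]; ring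
    have := hq (v + s • x)
    rw [h1, h2, h3, hv] at this
    linarith
  by_contra hne
  have hQ1 : 0 < Q + 1 := by linarith
  have h := key (-P / (Q + 1))
  have e : (-P / (Q + 1)) * P + (-P / (Q + 1)) ^ 2 * Q = -(P ^ 2) / (Q + 1) ^ 2 := by
    field_simp; ring
  rw [e] at h
  have hP2 : 0 < P ^ 2 := by positivity
  have : -(P ^ 2) / (Q + 1) ^ 2 < 0 := by
    apply div_neg_of_neg_of_pos <;> [linarith; positivity]
  linarith

/-- A positive semidefinite quadratic form on `ℝ²` whose kernel is the line spanned by a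
primitive integer vector `γ` equals `a · (γ₀ x₁ - γ₁ x₀)²` for some `a > 0`. -/
lemma rank_one_structure (q : QuadraticForm ℝ (Fin 2 → ℝ)) (hq : ∀ x, 0 ≤ q x)
    (γ : Fin 2 → ℤ) (hγprim : IsCoprime (γ 0) (γ 1))
    (hker : ∀ x : Fin 2 → ℝ, q x = 0 ↔ ∃ t : ℝ, x = t • fun i => (γ i : ℝ)) :
    ∃ a : ℝ, 0 < a ∧
      ∀ x : Fin 2 → ℝ, q x = a * ((γ 0 : ℝ) * x 1 - (γ 1 : ℝ) * x 0) ^ 2 := by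
  obtain ⟨u, v, huv⟩ := hγprim
  have huvr : (u : ℝ) * (γ 0 : ℝ) + (v : ℝ) * (γ 1 : ℝ) = 1 := by exact_mod_cast huv
  set γr : Fin 2 → ℝ := fun i => (γ i : ℝ) with hγr
  set δ : Fin 2 → ℝ := ![-(v : ℝ), (u : ℝ)] with hδ
  have hqγ : q γr = 0 := (hker γr).2 ⟨1, by simp [hγr]⟩
  set a : ℝ := q δ with ha
  have ha0 : 0 ≤ a := hq δ
  have hane : a ≠ 0 := by
    intro h0
    have hδ0 : q δ = 0 := by rw [← ha, h0]
    obtain ⟨t, ht⟩ := (hker δ).1 hδ0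
    have ht0 := congrFun ht 0
    have ht1 := congrFun ht 1
    simp only [hδ, Pi.smul_apply, smul_eq_mul, Matrix.cons_val_zero, Matrix.cons_val_one,
      Matrix.head_cons, hγr] at ht0 ht1
    have h10 : (1:ℝ) = 0 := by
      linear_combination -huvr + (γ 0 : ℝ) * ht1 - (γ 1 : ℝ) * ht0
    exact one_ne_zero h10
  refine ⟨a, lt_of_le_of_ne ha0 (Ne.symm hane), ?_⟩
  intro x
  set L : ℝ := (γ 0 : ℝ) * x 1 - (γ 1 : ℝ) * x 0 with hL
  set s : ℝ := (u : ℝ) * x 0 + (v : ℝ) * x 1 with hs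
  have hdecomp : x = s • γr + L • δ := by
    funext i
    fin_cases i
    · show x 0 = s * (γ 0 : ℝ) + L * (-(v:ℝ))
      rw [hL, hs]; linear_combination (-(x 0)) * huvr
    · show x 1 = s * (γ 1 : ℝ) + L * (u:ℝ)
      rw [hL, hs]; linear_combination (-(x 1)) * huvr
  have hpol : ∀ y, polar (⇑q) γr y = 0 := polar_zero_of_psd q hq γr hqγ
  have hsum : q x = q (s • γr) + q (L • δ) + polar (⇑q) (s • γr) (L • δ) := by
    rw [hdecomp]; simp only [QuadraticMap.polar]; ring
  rw [hsum, QuadraticMap.map_smul, QuadraticMap.map_smul, hqγ,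
    polar_smul_left, hpol, ← ha]
  simp only [smul_eq_mul, smul_zero, mul_zero]
  ring

abbrev SL2 := Matrix.SpecialLinearGroup (Fin 2) ℤ

/-- `Umat γ σ = σᵀ w` where `w = (-γ 1, γ 0)` spans the integral annihilator of `γ`. -/
def Umat (γ : Fin 2 → ℤ) (σ : SL2) (i : Fin 2) : ℤ :=
  γ 0 * (σ : Matrix (Fin 2) (Fin 2) ℤ) 1 i - γ 1 * (σ : Matrix (Fin 2) (Fin 2) ℤ) 0 i

lemma Umat_mul (γ : Fin 2 → ℤ) (σ ρ : SL2) (i : Fin 2) :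
    Umat γ (σ * ρ) i = Umat γ σ 0 * (ρ : Matrix (Fin 2) (Fin 2) ℤ) 0 i
      + Umat γ σ 1 * (ρ : Matrix (Fin 2) (Fin 2) ℤ) 1 i := by
  simp only [Umat, Matrix.SpecialLinearGroup.coe_mul, Matrix.mul_apply, Fin.sum_univ_two]
  ring

/-- The transvection `I + k γ wᵀ`, an element of the stabilizer of a form with kernel `γ`. -/
def transv (g : Fin 2 → ℤ) (k : ℤ) : SL2 :=
  ⟨!![1 - k * g 0 * g 1, k * g 0 ^ 2; -(k * g 1 ^ 2), 1 + k * g 0 * g 1], by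
    simp [Matrix.det_fin_two_of]; ring⟩

lemma transv_coe (g : Fin 2 → ℤ) (k : ℤ) :
    ((transv g k : SL2) : Matrix (Fin 2) (Fin 2) ℤ)
      = !![1 - k * g 0 * g 1, k * g 0 ^ 2; -(k * g 1 ^ 2), 1 + k * g 0 * g 1] := rfl

lemma Umat_transv (g : Fin 2 → ℤ) (k : ℤ) :
    Umat g (transv g k) 0 = -(g 1) ∧ Umat g (transv g k) 1 = g 0 := by
  constructor <;> · simp [Umat, transv_coe]; ring

lemma actSL_apply (q : QuadraticForm ℝ (Fin 2 → ℝ)) (a : ℝ) (γ : Fin 2 → ℤ)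
    (hqf : ∀ x : Fin 2 → ℝ, q x = a * ((γ 0 : ℝ) * x 1 - (γ 1 : ℝ) * x 0) ^ 2)
    (σ : SL2) (x : Fin 2 → ℝ) :
    actSL q σ x = a * ((Umat γ σ 0 : ℝ) * x 0 + (Umat γ σ 1 : ℝ) * x 1) ^ 2 := by
  simp only [actSL, QuadraticMap.comp_apply, Matrix.mulVecLin_apply]
  rw [hqf]
  have h0 : ((σ : Matrix (Fin 2) (Fin 2) ℤ).map (fun z => (z : ℝ))).mulVec x 0
      = ((σ : Matrix (Fin 2) (Fin 2) ℤ) 0 0 : ℝ) * x 0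
        + ((σ : Matrix (Fin 2) (Fin 2) ℤ) 0 1 : ℝ) * x 1 := by
    simp [Matrix.mulVec, dotProduct, Fin.sum_univ_two]
  have h1 : ((σ : Matrix (Fin 2) (Fin 2) ℤ).map (fun z => (z : ℝ))).mulVec x 1
      = ((σ : Matrix (Fin 2) (Fin 2) ℤ) 1 0 : ℝ) * x 0
        + ((σ : Matrix (Fin 2) (Fin 2) ℤ) 1 1 : ℝ) * x 1 := by
    simp [Matrix.mulVec, dotProduct, Fin.sum_univ_two]
  rw [h0, h1]
  simp only [Umat]
  push_cast
  ring

/-- An element `τ` with `τᵀ w = w` stabilizes `q = a (w·x)²`. -/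
lemma stab_of_Umat (q : QuadraticForm ℝ (Fin 2 → ℝ)) (a : ℝ) (γ : Fin 2 → ℤ)
    (hqf : ∀ x : Fin 2 → ℝ, q x = a * ((γ 0 : ℝ) * x 1 - (γ 1 : ℝ) * x 0) ^ 2)
    (τ : SL2) (h0 : Umat γ τ 0 = -(γ 1)) (h1 : Umat γ τ 1 = γ 0) :
    actSL q τ = q := by
  ext x
  rw [actSL_apply q a γ hqf τ x, h0, h1, hqf]
  push_cast
  ring

lemma gram_formula (Q : QuadraticForm ℝ (Fin 2 → ℝ)) (a a' u0 u1 w0 w1 : ℝ)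
    (hQ : ∀ x : Fin 2 → ℝ,
      Q x = a * (u0 * x 0 + u1 * x 1) ^ 2 + a' * (w0 * x 0 + w1 * x 1) ^ 2) :
    gramDet Q (fun i => (Pi.single i (1 : ℝ) : Fin 2 → ℝ))
      = a * a' * (u0 * w1 - u1 * w0) ^ 2 := by
  rw [gramDet, Matrix.det_fin_two]
  simp only [Matrix.of_apply, QuadraticMap.polar, hQ]
  norm_num [Pi.single_apply]
  ring

/-- Two elements with the same invariants `n` (up to `k·n` on `t`) are related by a
transvection from the right stabilizer. -/
lemma coset_transv (γ γ' : Fin 2 → ℤ) (c d : ℤ) (hcd : c * γ' 0 + d * γ' 1 = 1)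
    (σ σ₀ : SL2) (n k : ℤ)
    (H1 : γ' 0 * Umat γ σ 0 + γ' 1 * Umat γ σ 1 = n)
    (H2 : γ' 0 * Umat γ σ₀ 0 + γ' 1 * Umat γ σ₀ 1 = n)
    (H3 : (c * Umat γ σ 1 - d * Umat γ σ 0) - (c * Umat γ σ₀ 1 - d * Umat γ σ₀ 0) = n * k) :
    ∀ i, Umat γ (σ₀ * transv γ' k) i = Umat γ σ i := by
  intro i
  rw [Umat_mul]
  show Umat γ σ₀ 0 * (!![1 - k * γ' 0 * γ' 1, k * γ' 0 ^ 2;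
      -(k * γ' 1 ^ 2), 1 + k * γ' 0 * γ' 1] : Matrix (Fin 2) (Fin 2) ℤ) 0 i
    + Umat γ σ₀ 1 * (!![1 - k * γ' 0 * γ' 1, k * γ' 0 ^ 2;
      -(k * γ' 1 ^ 2), 1 + k * γ' 0 * γ' 1] : Matrix (Fin 2) (Fin 2) ℤ) 1 i = Umat γ σ i
  fin_cases i
  · show Umat γ σ₀ 0 * (1 - k * γ' 0 * γ' 1) + Umat γ σ₀ 1 * (-(k * γ' 1 ^ 2)) = Umat γ σ 0
    linear_combination (c - k * γ' 1) * H2 + γ' 1 * H3 + (Umat γ σ 0 - Umat γ σ₀ 0) * hcd - c * H1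
  · show Umat γ σ₀ 0 * (k * γ' 0 ^ 2) + Umat γ σ₀ 1 * (1 + k * γ' 0 * γ' 1) = Umat γ σ 1
    linear_combination (d + k * γ' 0) * H2 - γ' 0 * H3 + (Umat γ σ 1 - Umat γ σ₀ 1) * hcd - d * H1

/-- If `ρᵀ w = σᵀ w` then `σ ρ⁻¹` fixes `w` (transposed action). -/
lemma Umat_eq_w (γ : Fin 2 → ℤ) (σ ρ : SL2) (h : ∀ i, Umat γ ρ i = Umat γ σ i) :
    Umat γ (σ * ρ⁻¹) 0 = -(γ 1) ∧ Umat γ (σ * ρ⁻¹) 1 = γ 0 := by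
  set τ : SL2 := σ * ρ⁻¹ with hτ
  have hσ : σ = τ * ρ := by rw [hτ]; group
  have hdet : (ρ : Matrix (Fin 2) (Fin 2) ℤ) 0 0 * (ρ : Matrix (Fin 2) (Fin 2) ℤ) 1 1
      - (ρ : Matrix (Fin 2) (Fin 2) ℤ) 0 1 * (ρ : Matrix (Fin 2) (Fin 2) ℤ) 1 0 = 1 := by
    have := ρ.2
    rwa [Matrix.det_fin_two] at this
  have E0 : Umat γ τ 0 * (ρ : Matrix (Fin 2) (Fin 2) ℤ) 0 0
      + Umat γ τ 1 * (ρ : Matrix (Fin 2) (Fin 2) ℤ) 1 0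
      = γ 0 * (ρ : Matrix (Fin 2) (Fin 2) ℤ) 1 0 - γ 1 * (ρ : Matrix (Fin 2) (Fin 2) ℤ) 0 0 := by
    rw [← Umat_mul γ τ ρ 0, ← hσ]
    exact (h 0).symm
  have E1 : Umat γ τ 0 * (ρ : Matrix (Fin 2) (Fin 2) ℤ) 0 1
      + Umat γ τ 1 * (ρ : Matrix (Fin 2) (Fin 2) ℤ) 1 1
      = γ 0 * (ρ : Matrix (Fin 2) (Fin 2) ℤ) 1 1 - γ 1 * (ρ : Matrix (Fin 2) (Fin 2) ℤ) 0 1 := by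
    rw [← Umat_mul γ τ ρ 1, ← hσ]
    exact (h 1).symm
  constructor
  · linear_combination (ρ : Matrix (Fin 2) (Fin 2) ℤ) 1 1 * E0
      - (ρ : Matrix (Fin 2) (Fin 2) ℤ) 1 0 * E1 - (Umat γ τ 0 + γ 1) * hdet
  · linear_combination (-(ρ : Matrix (Fin 2) (Fin 2) ℤ) 0 1) * E0
      + (ρ : Matrix (Fin 2) (Fin 2) ℤ) 0 0 * E1 - (Umat γ τ 1 - γ 0) * hdet

end Aux

/-- Rank-2 case of Proposition 4.4: let `q, q′` be positive-semidefinite quadratic forms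
on `ℝ²`, each with one-dimensional kernel spanned by a primitive lattice vector (`γ`, `γ′`).
For any `C > 0`, the set of `σ ∈ SL₂(ℤ)` with `0 < Δ(ℤ², q∘σ + q′) < C` is contained in
finitely many double cosets `Γ_q σ₀ Γ_{q′}` of the stabilizers of `q` and `q′`. -/
theorem finitely_many_double_cosets_of_bounded_discriminant
    (q q' : QuadraticForm ℝ (Fin 2 → ℝ))
    (hq : ∀ x, 0 ≤ q x) (hq' : ∀ x, 0 ≤ q' x)
    (γ γ' : Fin 2 → ℤ)
    (hγprim : IsCoprime (γ 0) (γ 1)) (hγ'prim : IsCoprime (γ' 0) (γ' 1))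
    (hker : ∀ x : Fin 2 → ℝ, q x = 0 ↔ ∃ t : ℝ, x = t • fun i => (γ i : ℝ))
    (hker' : ∀ x : Fin 2 → ℝ, q' x = 0 ↔ ∃ t : ℝ, x = t • fun i => (γ' i : ℝ))
    (C : ℝ) (hC : 0 < C) :
    ∃ F : Finset (Matrix.SpecialLinearGroup (Fin 2) ℤ),
      ∀ σ : Matrix.SpecialLinearGroup (Fin 2) ℤ,
        0 < gramDet (actSL q σ + q') (fun i => (Pi.single i (1 : ℝ) : Fin 2 → ℝ)) →
        gramDet (actSL q σ + q') (fun i => (Pi.single i (1 : ℝ) : Fin 2 → ℝ)) < C →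
        ∃ σ₀ ∈ F, ∃ τ τ' : Matrix.SpecialLinearGroup (Fin 2) ℤ,
          actSL q τ = q ∧ actSL q' τ' = q' ∧ σ = τ * σ₀ * τ' := by
  classical
  obtain ⟨a, ha, hqf⟩ := rank_one_structure q hq γ hγprim hker
  obtain ⟨a', ha', hq'f⟩ := rank_one_structure q' hq' γ' hγ'prim hker'
  obtain ⟨c, d, hcd⟩ := hγ'prim
  have haa' : 0 < a * a' := mul_pos ha ha'
  -- the two integer invariants of `σ`
  let nm : SL2 → ℤ := fun ς => γ' 0 * Umat γ ς 0 + γ' 1 * Umat γ ς 1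
  let tm : SL2 → ℤ := fun ς => c * Umat γ ς 1 - d * Umat γ ς 0
  -- Gram determinant formula
  have hgram : ∀ σ : SL2,
      gramDet (actSL q σ + q') (fun i => (Pi.single i (1 : ℝ) : Fin 2 → ℝ))
        = a * a' * ((nm σ : ℤ) : ℝ) ^ 2 := by
    intro σ
    have hQ : ∀ x : Fin 2 → ℝ, (actSL q σ + q') x
        = a * ((Umat γ σ 0 : ℝ) * x 0 + (Umat γ σ 1 : ℝ) * x 1) ^ 2
          + a' * ((-(γ' 1 : ℝ)) * x 0 + (γ' 0 : ℝ) * x 1) ^ 2 := by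
      intro x
      rw [QuadraticMap.add_apply, actSL_apply q a γ hqf σ x, hq'f]
      ring
    rw [gram_formula _ a a' _ _ _ _ hQ]
    show _ = a * a' * ((γ' 0 * Umat γ σ 0 + γ' 1 * Umat γ σ 1 : ℤ) : ℝ) ^ 2
    push_cast
    ring
  set B : ℤ := max 1 ⌈C / (a * a')⌉ with hB
  refine ⟨(Finset.Icc (-B) B ×ˢ Finset.Icc 0 B).image
    (fun p : ℤ × ℤ => if h : ∃ σ' : SL2, nm σ' = p.1 ∧ tm σ' % p.1 = p.2
      then h.choose else 1), ?_⟩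
  intro σ hpos hlt
  rw [hgram σ] at hpos hlt
  have hn0 : nm σ ≠ 0 := by
    intro h
    rw [h] at hpos; simp at hpos
  have hnB : (nm σ) ^ 2 ≤ B := by
    have h1 : ((nm σ : ℤ) : ℝ) ^ 2 < C / (a * a') := by
      rw [lt_div_iff₀ haa']; nlinarith
    have h2 : (C / (a * a') : ℝ) ≤ (B : ℝ) := by
      calc (C / (a * a') : ℝ) ≤ (⌈C / (a * a')⌉ : ℝ) := Int.le_ceil _
        _ ≤ (B : ℝ) := by exact_mod_cast le_max_right 1 ⌈C / (a * a')⌉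
    have h3 : (((nm σ) ^ 2 : ℤ) : ℝ) < (B : ℝ) := by push_cast; linarith
    exact_mod_cast h3.le
  have habs : |nm σ| ≤ (nm σ) ^ 2 := by
    have h1 : 1 ≤ |nm σ| := Int.one_le_abs (by omega)
    nlinarith [abs_nonneg (nm σ), sq_abs (nm σ)]
  have hmem : ((nm σ, tm σ % nm σ) : ℤ × ℤ) ∈ Finset.Icc (-B) B ×ˢ Finset.Icc 0 B := by
    rw [Finset.mem_product, Finset.mem_Icc, Finset.mem_Icc]
    have h1 := abs_le.mp (habs.trans hnB)
    refine ⟨⟨h1.1, h1.2⟩, Int.emod_nonneg _ hn0, ?_⟩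
    have h2 := Int.emod_lt (tm σ) hn0
    have h3 := habs.trans hnB
    omega
  have hex : ∃ σ' : SL2, nm σ' = nm σ ∧ tm σ' % nm σ = tm σ % nm σ := ⟨σ, rfl, rfl⟩
  refine ⟨_, Finset.mem_image_of_mem _ hmem, ?_⟩
  rw [dif_pos hex]
  obtain ⟨hn₀, hr₀⟩ := hex.choose_spec
  set σ₀ : SL2 := hex.choose with hσ₀
  -- the difference of `t`-invariants is divisible by `n`
  have hdvd : nm σ ∣ tm σ - tm σ₀ := by
    have hmod : tm σ₀ ≡ tm σ [ZMOD nm σ] := hr₀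
    exact hmod.dvd
  obtain ⟨k, hk⟩ := hdvd
  -- the right stabilizer element
  have hU : ∀ i, Umat γ (σ₀ * transv γ' k) i = Umat γ σ i := by
    refine coset_transv γ γ' c d hcd σ σ₀ (nm σ) k rfl hn₀ ?_
    rw [← hk]
  -- the left stabilizer element
  obtain ⟨hw0, hw1⟩ := Umat_eq_w γ σ (σ₀ * transv γ' k) hU
  refine ⟨σ * (σ₀ * transv γ' k)⁻¹, transv γ' k,
    stab_of_Umat q a γ hqf _ hw0 hw1,
    stab_of_Umat q' a' γ' hq'f _ (Umat_transv γ' k).1 (Umat_transv γ' k).2, ?_⟩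
  group
end
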